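/- For the Lorentzian catenoid parameterized in polar coordinates via Weierstrass data g = z, φ₃ = dz/z on {0 < r < |z| < 1}, the surface is asymptotic to the light cone at the singularity: writing X(re^{iθ}) for the immersion normalized so X → 0 as r → 1, one has X(re^{iθ})/x₃(X(re^{iθ})) → (sin θ, −cos θ, 1) as r → 1, uniformly in θ. -/

import Mathlib

/-!
In polar coordinates the three coordinates integrate in closed form:
`x₁ = sin θ · (r - r⁻¹) / 2`, `x₂ = -cos θ · (r - r⁻¹) / 2` and `x₃ = log r`.
Hence `X / x₃ = q(r) · (sin θ, -cos θ, 1)` with `q(r) = (r - r⁻¹) / (2 log r)` independent of `θ`,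
and `q(r) → 1` as `r → 1` since numerator and denominator both vanish at `1` with derivative `2`.
The convergence is uniform in `θ` because `|sin θ|, |cos θ| ≤ 1`.
-/

open Complex

/-- First coordinate of the Lorentzian catenoid (`f ≡ 1`) in polar coordinates:
`2X = Re ∫₁^r (1/s)·(i(e^{−iθ}/s − s e^{iθ}), −(e^{−iθ}/s + s e^{iθ}), 2) ds`. -/
noncomputable def catX₁ (r θ : ℝ) : ℝ :=
  (1 / 2) * ∫ s in (1 : ℝ)..r,
    ((I * (Complex.exp (-(θ : ℂ) * I) / (s : ℂ) - (s : ℂ) * Complex.exp ((θ : ℂ) * I)))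
      / (s : ℂ)).re

/-- Second coordinate of the Lorentzian catenoid in polar coordinates. -/
noncomputable def catX₂ (r θ : ℝ) : ℝ :=
  (1 / 2) * ∫ s in (1 : ℝ)..r,
    ((-(Complex.exp (-(θ : ℂ) * I) / (s : ℂ) + (s : ℂ) * Complex.exp ((θ : ℂ) * I)))
      / (s : ℂ)).re

/-- Third coordinate of the Lorentzian catenoid in polar coordinates. -/
noncomputable def catX₃ (r θ : ℝ) : ℝ :=
  (1 / 2) * ∫ s in (1 : ℝ)..r, ((2 : ℂ) / (s : ℂ)).re

open Filter Topology

theorem HasDerivAt.tendsto_div_of_eq_zero {𝕜 : Type*} [NontriviallyNormedField 𝕜]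
    {f g : 𝕜 → 𝕜} {f' g' a : 𝕜} (hf : HasDerivAt f f' a) (hg : HasDerivAt g g' a)
    (hfa : f a = 0) (hga : g a = 0) (hg' : g' ≠ 0) :
    Tendsto (fun x => f x / g x) (𝓝[≠] a) (𝓝 (f' / g')) := by
  refine ((hasDerivAt_iff_tendsto_slope.mp hf).div
    (hasDerivAt_iff_tendsto_slope.mp hg) hg').congr' ?_
  filter_upwards [self_mem_nhdsWithin] with x hx
  have hxa : x - a ≠ 0 := sub_ne_zero.mpr hx
  simp only [Pi.div_apply, slope_def_field, hfa, hga, sub_zero]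
  field_simp

theorem integral_inv_sq_add_one {a b : ℝ} (h : (0 : ℝ) ∉ Set.uIcc a b) :
    ∫ s in a..b, ((s ^ 2)⁻¹ + 1) = (b - b⁻¹) - (a - a⁻¹) := by
  have hne : ∀ s ∈ Set.uIcc a b, s ≠ 0 := fun s hs h0 => h (h0 ▸ hs)
  refine intervalIntegral.integral_eq_sub_of_hasDerivAt (f := fun s => s - s⁻¹)
    (fun s hs => ?_) ?_
  · simpa [add_comm] using (hasDerivAt_id' s).fun_sub (hasDerivAt_inv (hne s hs))
  · exact (intervalIntegral.intervalIntegrable_inv (fun s hs => pow_ne_zero 2 (hne s hs))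
      (by fun_prop)).add intervalIntegrable_const

theorem tendsto_sub_inv_div_two_mul_log :
    Tendsto (fun r : ℝ => (r - r⁻¹) / (2 * Real.log r)) (𝓝[≠] 1) (𝓝 1) := by
  have hnum : HasDerivAt (fun r : ℝ => r - r⁻¹) 2 1 := by
    simpa [one_add_one_eq_two] using
      (hasDerivAt_id' (1 : ℝ)).fun_sub (hasDerivAt_inv one_ne_zero)
  have hden : HasDerivAt (fun r : ℝ => 2 * Real.log r) 2 1 := by
    simpa using (Real.hasDerivAt_log one_ne_zero).const_mul 2
  simpa using hnum.tendsto_div_of_eq_zero hden (by simp) (by simp) two_ne_zero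

theorem abs_mul_sub_self_le {a q : ℝ} (ha : |a| ≤ 1) : |a * q - a| ≤ |q - 1| :=
  calc |a * q - a| = |a| * |q - 1| := by rw [← abs_mul, mul_sub, mul_one]
    _ ≤ |q - 1| := mul_le_of_le_one_left (abs_nonneg _) ha

theorem catX₁_integrand_re (θ : ℝ) {s : ℝ} (hs : s ≠ 0) :
    ((I * (Complex.exp (-(θ : ℂ) * I) / (s : ℂ) - (s : ℂ) * Complex.exp ((θ : ℂ) * I)))
      / (s : ℂ)).re = Real.sin θ * ((s ^ 2)⁻¹ + 1) := by
  simp only [neg_mul, div_ofReal_re, div_ofReal_im, mul_re, mul_im, sub_re, sub_im, neg_re, neg_im,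
    I_re, I_im, ofReal_re, ofReal_im, exp_re, exp_im, mul_zero, zero_mul, mul_one, add_zero, sub_zero, sub_self, neg_zero,
    Real.exp_zero, Real.cos_neg, Real.sin_neg]
  field_simp
  ring

theorem catX₂_integrand_re (θ : ℝ) {s : ℝ} (hs : s ≠ 0) :
    ((-(Complex.exp (-(θ : ℂ) * I) / (s : ℂ) + (s : ℂ) * Complex.exp ((θ : ℂ) * I)))
      / (s : ℂ)).re = -Real.cos θ * ((s ^ 2)⁻¹ + 1) := by
  simp only [neg_mul, div_ofReal_re, mul_re, mul_im, add_re, neg_re, neg_im, I_re, I_im, ofReal_re,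
    ofReal_im, exp_re, exp_im, mul_zero, zero_mul, mul_one, add_zero, sub_zero, sub_self, neg_zero, Real.exp_zero,
    Real.cos_neg]
  field_simp

section ClosedForms

variable {r : ℝ} (hr : 0 < r) (θ : ℝ)
include hr

theorem catX₁_eq : catX₁ r θ = Real.sin θ * (r - r⁻¹) / 2 := by
  have h0 : (0 : ℝ) ∉ Set.uIcc 1 r := Set.notMem_uIcc_of_lt one_pos hr
  rw [catX₁, intervalIntegral.integral_congr
      (fun s hs => catX₁_integrand_re θ (fun h => h0 (h ▸ hs))),
    intervalIntegral.integral_const_mul, integral_inv_sq_add_one h0]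
  ring

theorem catX₂_eq : catX₂ r θ = -Real.cos θ * (r - r⁻¹) / 2 := by
  have h0 : (0 : ℝ) ∉ Set.uIcc 1 r := Set.notMem_uIcc_of_lt one_pos hr
  rw [catX₂, intervalIntegral.integral_congr
      (fun s hs => catX₂_integrand_re θ (fun h => h0 (h ▸ hs))),
    intervalIntegral.integral_const_mul, integral_inv_sq_add_one h0]
  ring

theorem catX₃_eq : catX₃ r θ = Real.log r := by
  have hre : ∀ s : ℝ, ((2 : ℂ) / (s : ℂ)).re = 2 * s⁻¹ := fun s => by
    rw [Complex.div_ofReal_re]; simp [div_eq_mul_inv]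
  simp_rw [catX₃, hre, intervalIntegral.integral_const_mul, integral_inv_of_pos one_pos hr,
    div_one]
  ring

end ClosedForms

/-- The Lorentzian catenoid is asymptotic to the light cone at its singularity:
`X(re^{iθ})/x₃(X(re^{iθ})) → (sin θ, −cos θ, 1)` as `r → 1⁻`, uniformly in `θ`. -/
theorem catenoid_asymptotic_to_light_cone :
    ∀ ε > (0 : ℝ), ∃ δ > (0 : ℝ), ∀ r θ : ℝ, 0 < r → 1 - δ < r → r < 1 →
      |catX₁ r θ / catX₃ r θ - Real.sin θ| < ε
      ∧ |catX₂ r θ / catX₃ r θ - (-Real.cos θ)| < ε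
      ∧ |catX₃ r θ / catX₃ r θ - 1| < ε := by
  intro ε hε
  obtain ⟨δ, hδ, hq⟩ := Metric.tendsto_nhdsWithin_nhds.mp tendsto_sub_inv_div_two_mul_log ε hε
  refine ⟨δ, hδ, fun r θ hr0 hrδ hr1 => ?_⟩
  have hq1 : |(r - r⁻¹) / (2 * Real.log r) - 1| < ε :=
    hq hr1.ne (by rw [Real.dist_eq, abs_sub_lt_iff]; constructor <;> linarith)
  have hratio : ∀ a : ℝ,
      a * (r - r⁻¹) / 2 / Real.log r = a * ((r - r⁻¹) / (2 * Real.log r)) := fun a => by ring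
  have hlog : Real.log r ≠ 0 := (Real.log_neg hr0 hr1).ne
  rw [catX₁_eq hr0, catX₂_eq hr0, catX₃_eq hr0, hratio, hratio, div_self hlog, sub_self,
    abs_zero]
  exact ⟨(abs_mul_sub_self_le (Real.abs_sin_le_one θ)).trans_lt hq1,
    (abs_mul_sub_self_le ((abs_neg _).trans_le (Real.abs_cos_le_one θ))).trans_lt hq1, hε⟩
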